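/- For a connected graph G with n vertices and m edges, Alb(u∨G) − Alb(G) = n(n−1) − 2m, where u∨G is the join of a new vertex u with G. -/

import Mathlib

open Finset

/-- The Albertson irregularity index `Alb(G) = ∑_{uv∈E(G)} |d(u)-d(v)|`. -/
noncomputable def Alb {V : Type*} [Fintype V] (G : SimpleGraph V) [DecidableRel G.Adj] : ℝ :=
  (∑ u : V, ∑ v ∈ G.neighborFinset u, |(G.degree u : ℝ) - (G.degree v : ℝ)|) / 2

/-- The join `u ∨ G`: a new vertex (`none`) adjacent to every vertex of `G`. -/
def cone {V : Type*} (G : SimpleGraph V) : SimpleGraph (Option V) where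
  Adj x y :=
    (∃ v, x = none ∧ y = some v) ∨ (∃ v, x = some v ∧ y = none) ∨
    (∃ a b, x = some a ∧ y = some b ∧ G.Adj a b)
  symm := by
    constructor
    rintro x y (⟨v, hx, hy⟩ | ⟨v, hx, hy⟩ | ⟨a, b, hx, hy, h⟩)
    · exact Or.inr (Or.inl ⟨v, hy, hx⟩)
    · exact Or.inl ⟨v, hy, hx⟩
    · exact Or.inr (Or.inr ⟨b, a, hy, hx, h.symm⟩)
  loopless := by
    constructor
    rintro x (⟨v, hx, hy⟩ | ⟨v, hx, hy⟩ | ⟨a, b, hx, hy, h⟩) <;> subst hx <;> simp_all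

instance coneAdjDecidable {V : Type*} [Fintype V] [DecidableEq V]
    (G : SimpleGraph V) [DecidableRel G.Adj] : DecidableRel (cone G).Adj := fun x y => by
  unfold cone
  infer_instance

/-!
Adding the apex shifts every degree of `G` by one, so the edges of `G` keep their contributions
to `Alb`. Each new edge `u v` contributes `n - (d(v) + 1) ≥ 0`, and summing over `v` with the
handshake lemma gives `n (n - 1) - 2 m`.
-/

namespace SimpleGraph

variable {V : Type*}

@[simp]
lemma cone_adj_none_some (G : SimpleGraph V) (v : V) : (cone G).Adj none (some v) :=
  Or.inl ⟨v, rfl, rfl⟩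

@[simp]
lemma cone_adj_some_some (G : SimpleGraph V) (a b : V) :
    (cone G).Adj (some a) (some b) ↔ G.Adj a b := by
  simp [cone]

variable [Fintype V] [DecidableEq V] (G : SimpleGraph V) [DecidableRel G.Adj]

lemma neighborFinset_cone_none : (cone G).neighborFinset none = univ.image some := by
  ext (_ | v) <;> simp

lemma neighborFinset_cone_some (u : V) :
    (cone G).neighborFinset (some u) = insert none ((G.neighborFinset u).image some) := by
  ext (_ | v) <;> simp [(cone_adj_none_some G u).symm]

lemma degree_cone_none : (cone G).degree none = Fintype.card V := by
  rw [← card_neighborFinset_eq_degree, neighborFinset_cone_none,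
    card_image_of_injective _ (Option.some_injective V), card_univ]

lemma degree_cone_some (u : V) : (cone G).degree (some u) = G.degree u + 1 := by
  rw [← card_neighborFinset_eq_degree, neighborFinset_cone_some, card_insert_of_notMem (by simp),
    card_image_of_injective _ (Option.some_injective V), card_neighborFinset_eq_degree]

lemma abs_degree_cone_some_sub_degree_cone_none (v : V) :
    |((cone G).degree (some v) : ℝ) - (cone G).degree none| =
      Fintype.card V - 1 - G.degree v := by
  have hlt : (G.degree v : ℝ) + 1 ≤ Fintype.card V := by exact_mod_cast G.degree_lt_card_verts v
  rw [degree_cone_none, degree_cone_some, abs_of_nonpos (by push_cast; linarith)]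
  push_cast
  ring

lemma alb_cone :
    Alb (cone G) = Alb G + ∑ v : V, ((Fintype.card V : ℝ) - 1 - G.degree v) := by
  have apex : ∑ y ∈ (cone G).neighborFinset none,
      |((cone G).degree none : ℝ) - (cone G).degree y| =
        ∑ v : V, ((Fintype.card V : ℝ) - 1 - G.degree v) := by
    rw [neighborFinset_cone_none, sum_image (Option.some_injective V).injOn]
    simp only [abs_sub_comm ((cone G).degree none : ℝ), abs_degree_cone_some_sub_degree_cone_none]
  have base (u : V) : ∑ y ∈ (cone G).neighborFinset (some u),
      |((cone G).degree (some u) : ℝ) - (cone G).degree y| =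
        ((Fintype.card V : ℝ) - 1 - G.degree u) +
          ∑ v ∈ G.neighborFinset u, |(G.degree u : ℝ) - G.degree v| := by
    rw [neighborFinset_cone_some, sum_insert (by simp),
      sum_image (Option.some_injective V).injOn, abs_degree_cone_some_sub_degree_cone_none]
    simp only [degree_cone_some, Nat.cast_add, Nat.cast_one, add_sub_add_right_eq_sub]
  unfold Alb
  rw [Fintype.sum_option, apex, sum_congr rfl fun u _ => base u, sum_add_distrib]
  ring

end SimpleGraph

theorem stmt9_general {V : Type*} [Fintype V] [DecidableEq V]
    (G : SimpleGraph V) [DecidableRel G.Adj] :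
    Alb (cone G) - Alb G =
      (Fintype.card V : ℝ) * ((Fintype.card V : ℝ) - 1) - 2 * (G.edgeFinset.card : ℝ) := by
  have handshake : ∑ v : V, (G.degree v : ℝ) = 2 * G.edgeFinset.card := by
    exact_mod_cast G.sum_degrees_eq_twice_card_edges
  rw [G.alb_cone, add_sub_cancel_left, sum_sub_distrib, handshake, sum_const, card_univ,
    nsmul_eq_mul]

theorem stmt9 {V : Type*} [Fintype V] [DecidableEq V]
    (G : SimpleGraph V) [DecidableRel G.Adj] (hG : G.Connected) :
    Alb (cone G) - Alb G =
      (Fintype.card V : ℝ) * ((Fintype.card V : ℝ) - 1) - 2 * (G.edgeFinset.card : ℝ) :=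
  stmt9_general G
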